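/- arXiv:1604.05505 — 3 statements merged into one kernel-verified Lean document; each statement's English description precedes it below -/
import Mathlib

section
/- For h analytic on the unit disc with values in a Banach space Y, and l a positive integer, one has the integral representation (D^{-l}h)(rζ) = (1/(Γ(l)·r)) ∫₀^r h(sζ) (log(r/s))^{l-1} ds for all r ∈ (0,1) and ζ on the unit circle. -/
open MeasureTheory Set

private lemma image_aux {r : ℝ} (hr : 0 < r) :
    (fun t : ℝ => r * Real.exp (-t)) '' Set.Ioi 0 = Set.Ioo 0 r := by
  ext y
  constructor
  · rintro ⟨t, ht, rfl⟩
    have h1 : Real.exp (-t) < 1 := Real.exp_lt_one_iff.mpr (by simpa using ht)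
    have h2 : 0 < Real.exp (-t) := Real.exp_pos _
    refine ⟨by positivity, ?_⟩
    show r * Real.exp (-t) < r
    nlinarith
  · rintro ⟨hy0, hyr⟩
    refine ⟨Real.log (r / y), Real.log_pos (by rw [lt_div_iff₀ hy0]; linarith), ?_⟩
    show r * Real.exp (-Real.log (r / y)) = y
    rw [Real.exp_neg, Real.exp_log (by positivity)]
    field_simp

private lemma key_int {l : ℕ} (hl : 1 ≤ l) (n : ℕ) {r : ℝ} (hr : 0 < r) :
    IntegrableOn (fun s => Real.log (r / s) ^ (l - 1) * s ^ n) (Set.Ioo 0 r) ∧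
    ∫ s in Set.Ioo (0:ℝ) r, Real.log (r / s) ^ (l - 1) * s ^ n
      = Real.Gamma l * (r ^ (n + 1) * (((1 + n : ℝ)) ^ l)⁻¹) := by
  set f : ℝ → ℝ := fun t => r * Real.exp (-t) with hf
  have hderiv : ∀ t ∈ Set.Ioi (0:ℝ),
      HasDerivWithinAt f (-(r * Real.exp (-t))) (Set.Ioi 0) t := by
    intro t _
    have h1 : HasDerivAt f (r * (Real.exp (-t) * (-1))) t :=
      ((Real.hasDerivAt_exp (-t)).comp t (hasDerivAt_neg t)).const_mul r
    have : r * (Real.exp (-t) * (-1)) = -(r * Real.exp (-t)) := by ring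
    exact (this ▸ h1).hasDerivWithinAt
  have hinj : Set.InjOn f (Set.Ioi 0) := fun a _ b _ hab => by
    have := mul_left_cancel₀ (ne_of_gt hr) hab
    exact neg_injective (Real.exp_injective this)
  have hcast : ((l - 1 : ℕ) : ℝ) = (l : ℝ) - 1 := by
    rw [Nat.cast_sub hl, Nat.cast_one]
  have heq : ∀ t ∈ Set.Ioi (0:ℝ),
      |(-(r * Real.exp (-t)))| • (Real.log (r / f t) ^ (l - 1) * (f t) ^ n)
        = r ^ (n + 1) * (t ^ ((l:ℝ) - 1) * Real.exp (-((n + 1 : ℝ) * t))) := by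
    intro t _
    have hlog : Real.log (r / f t) = t := by
      have : r / f t = Real.exp t := by
        rw [hf]; simp only []
        rw [Real.exp_neg]; field_simp
      rw [this, Real.log_exp]
    have habs : |(-(r * Real.exp (-t)))| = r * Real.exp (-t) := by
      rw [abs_neg, abs_of_pos (by positivity)]
    have hexp : Real.exp (-t) * Real.exp (-t) ^ n = Real.exp (-((n + 1 : ℝ) * t)) := by
      rw [← Real.exp_nat_mul, ← Real.exp_add]; congr 1; push_cast; ring
    have hpow : (t : ℝ) ^ (l - 1) = t ^ ((l:ℝ) - 1) := by
      rw [← hcast, Real.rpow_natCast]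
    rw [habs, hlog, smul_eq_mul, hf]
    simp only []
    rw [mul_pow, ← hpow]
    calc r * Real.exp (-t) * (t ^ (l-1) * (r ^ n * Real.exp (-t) ^ n))
        = r ^ (n+1) * (t ^ (l-1) * (Real.exp (-t) * Real.exp (-t) ^ n)) := by ring
      _ = _ := by rw [hexp]
  have himg := image_aux hr
  have hintR : IntegrableOn
      (fun t => r ^ (n + 1) * (t ^ ((l:ℝ) - 1) * Real.exp (-((n + 1 : ℝ) * t))))
      (Set.Ioi (0:ℝ)) := by
    apply Integrable.const_mul
    apply Integrable.mono' (Real.GammaIntegral_convergent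
      (show (0:ℝ) < l by exact_mod_cast hl.trans_lt' zero_lt_one))
    · exact Measurable.aestronglyMeasurable (by fun_prop)
    · filter_upwards [self_mem_ae_restrict measurableSet_Ioi] with t ht
      have ht0 : (0:ℝ) < t := ht
      have h1 : Real.exp (-((n + 1 : ℝ) * t)) ≤ Real.exp (-t) := by
        apply Real.exp_le_exp.mpr; nlinarith [Nat.cast_nonneg (α := ℝ) n]
      have h2 : (0:ℝ) ≤ t ^ ((l:ℝ) - 1) := Real.rpow_nonneg ht0.le _
      rw [Real.norm_eq_abs, abs_of_nonneg (by positivity)]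
      calc t ^ ((l:ℝ)-1) * Real.exp (-((n+1:ℝ)*t)) ≤ t ^ ((l:ℝ)-1) * Real.exp (-t) :=
            mul_le_mul_of_nonneg_left h1 h2
        _ = Real.exp (-t) * t ^ ((l:ℝ)-1) := mul_comm _ _
  constructor
  · rw [← himg]
    rw [integrableOn_image_iff_integrableOn_abs_deriv_smul measurableSet_Ioi hderiv hinj]
    exact (integrableOn_congr_fun heq measurableSet_Ioi).mpr hintR
  · rw [← himg,
      integral_image_eq_integral_abs_deriv_smul measurableSet_Ioi hderiv hinj]
    rw [setIntegral_congr_fun measurableSet_Ioi heq]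
    rw [integral_const_mul, Real.integral_rpow_mul_exp_neg_mul_Ioi
      (show (0:ℝ) < l by exact_mod_cast hl.trans_lt' zero_lt_one) (by positivity)]
    rw [one_div, Real.rpow_natCast, inv_pow]
    rw [show ((n:ℝ)+1) = (1+n:ℝ) by ring]
    ring

/-- Integral representation of `D^{-l}`:
`(D^{-l}h)(rζ) = (1/(Γ(l) r)) ∫₀^r h(sζ) (log(r/s))^{l-1} ds` for `0 < r < 1`, `|ζ| = 1`. -/
theorem stmt_9 (Y : Type) [NormedAddCommGroup Y] [NormedSpace ℂ Y] [CompleteSpace Y]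
    (l : ℕ) (hl : 1 ≤ l) (a : ℕ → Y) (h g : ℂ → Y)
    (hh : ∀ z ∈ Metric.ball (0 : ℂ) 1, HasSum (fun n : ℕ => z ^ n • a n) (h z))
    (hg : ∀ z ∈ Metric.ball (0 : ℂ) 1,
      HasSum (fun n : ℕ => (((1 + n : ℝ)) ^ l)⁻¹ • z ^ n • a n) (g z)) :
    ∀ r : ℝ, 0 < r → r < 1 → ∀ ζ : ℂ, ‖ζ‖ = 1 →
      g ((r : ℂ) * ζ) =
        (Real.Gamma l * r)⁻¹ •
          ∫ s in (0 : ℝ)..r, Real.log (r / s) ^ (l - 1) • h ((s : ℂ) * ζ) := by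
  intro r hr0 hr1 ζ hζ
  have hΓ : 0 < Real.Gamma l :=
    Real.Gamma_pos_of_pos (by exact_mod_cast hl.trans_lt' zero_lt_one)
  set v : ℕ → Y := fun n => ζ ^ n • a n with hv
  have hnormv : ∀ n, ‖v n‖ = ‖a n‖ := fun n => by
    rw [hv, norm_smul, norm_pow, hζ, one_pow, one_mul]
  have hmemz : ∀ s : ℝ, 0 < s → s < 1 → ((s : ℂ) * ζ) ∈ Metric.ball (0 : ℂ) 1 := by
    intro s hs0 hs1
    rw [Metric.mem_ball, dist_zero_right, norm_mul, hζ, mul_one, Complex.norm_real,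
      Real.norm_eq_abs, abs_of_pos hs0]
    exact hs1
  have hterm : ∀ (s : ℝ) (n : ℕ), ((s : ℂ) * ζ) ^ n • a n = (s ^ n : ℝ) • v n := by
    intro s n
    rw [mul_pow, mul_smul, ← Complex.ofReal_pow, Complex.coe_smul]
  -- the coefficient functions
  set c : ℕ → ℝ → ℝ := fun n s => Real.log (r / s) ^ (l - 1) * s ^ n with hc
  set F : ℕ → ℝ → Y := fun n s => c n s • v n with hF
  have hcnonneg : ∀ n, ∀ s ∈ Set.Ioo (0:ℝ) r, 0 ≤ c n s := by
    intro n s hs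
    have : (0:ℝ) ≤ Real.log (r / s) :=
      Real.log_nonneg ((one_le_div hs.1).mpr hs.2.le)
    simp only [hc]
    exact mul_nonneg (pow_nonneg this _) (pow_nonneg hs.1.le n)
  have hFint : ∀ n, Integrable (F n) (volume.restrict (Set.Ioo 0 r)) := fun n =>
    ((key_int hl n hr0).1).smul_const (v n)
  -- value of norm integrals
  have hnormint : ∀ n, ∫ s in Set.Ioo (0:ℝ) r, ‖F n s‖
      = Real.Gamma l * (r ^ (n + 1) * (((1 + n : ℝ)) ^ l)⁻¹) * ‖a n‖ := by
    intro n
    have : ∀ s ∈ Set.Ioo (0:ℝ) r, ‖F n s‖ = c n s * ‖a n‖ := by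
      intro s hs
      rw [hF, norm_smul, Real.norm_eq_abs, abs_of_nonneg (hcnonneg n s hs), hnormv]
    rw [setIntegral_congr_fun measurableSet_Ioo this, integral_mul_const,
      (key_int hl n hr0).2]
  -- summability of ∑ rⁿ ‖a n‖
  have hsummable : Summable (fun n => r ^ n * ‖a n‖) := by
    set ρ : ℝ := (r + 1) / 2 with hρ
    have hρ0 : 0 < ρ := by positivity
    have hρ1 : ρ < 1 := by rw [hρ]; linarith
    have hrρ : r < ρ := by rw [hρ]; linarith
    have hmem : ((ρ : ℂ)) ∈ Metric.ball (0 : ℂ) 1 := by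
      rw [Metric.mem_ball, dist_zero_right, Complex.norm_real, Real.norm_eq_abs,
        abs_of_pos hρ0]
      exact hρ1
    have hs := (hh _ hmem).summable
    have h0 : Filter.Tendsto (fun n => ‖(ρ : ℂ) ^ n • a n‖) Filter.atTop (nhds 0) := by
      simpa using hs.tendsto_atTop_zero.norm
    obtain ⟨C, hC⟩ := h0.bddAbove_range
    have hCb : ∀ n, ρ ^ n * ‖a n‖ ≤ C := by
      intro n
      have := hC ⟨n, rfl⟩
      simpa [norm_smul, norm_pow, Complex.norm_real, Real.norm_eq_abs,
        abs_of_pos hρ0] using this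
    have hgeo : Summable (fun n : ℕ => C * (r / ρ) ^ n) :=
      (summable_geometric_of_lt_one (by positivity) ((div_lt_one hρ0).mpr hrρ)).mul_left C
    refine Summable.of_nonneg_of_le (fun n => by positivity) (fun n => ?_) hgeo
    have hkey : r ^ n * ‖a n‖ = (r / ρ) ^ n * (ρ ^ n * ‖a n‖) := by
      rw [div_pow]; field_simp
    rw [hkey, mul_comm C _]
    exact mul_le_mul_of_nonneg_left (hCb n) (by positivity)
  have hnormsummable : Summable (fun n => ∫ s in Set.Ioo (0:ℝ) r, ‖F n s‖) := by
    simp_rw [hnormint]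
    apply Summable.of_nonneg_of_le (fun n => by positivity)
      (fun n => ?_) ((hsummable.mul_left (Real.Gamma l * r)))
    have h1 : (((1 + n : ℝ)) ^ l)⁻¹ ≤ 1 := by
      rw [inv_le_one_iff₀]
      right
      exact one_le_pow₀ (by linarith [Nat.cast_nonneg (α := ℝ) n])
    have h2 : (0:ℝ) ≤ r ^ (n + 1) * ‖a n‖ := by positivity
    calc Real.Gamma l * (r ^ (n + 1) * (((1 + n : ℝ)) ^ l)⁻¹) * ‖a n‖
        ≤ Real.Gamma l * (r ^ (n + 1) * 1) * ‖a n‖ := by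
          apply mul_le_mul_of_nonneg_right _ (norm_nonneg _)
          apply mul_le_mul_of_nonneg_left _ hΓ.le
          exact mul_le_mul_of_nonneg_left h1 (by positivity)
      _ = Real.Gamma l * r * (r ^ n * ‖a n‖) := by ring
  -- exchange sum and integral
  have hsum_int : HasSum (fun n => ∫ s in Set.Ioo (0:ℝ) r, F n s)
      (∫ s in Set.Ioo (0:ℝ) r, ∑' n, F n s) :=
    hasSum_integral_of_summable_integral_norm hFint hnormsummable
  -- identify the pointwise sum with the integrand
  have hptwise : ∀ s ∈ Set.Ioo (0:ℝ) r,
      (∑' n, F n s) = Real.log (r / s) ^ (l - 1) • h ((s : ℂ) * ζ) := by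
    intro s hs
    have hsum := (hh _ (hmemz s hs.1 (hs.2.trans hr1))).const_smul
      (Real.log (r / s) ^ (l - 1))
    have heqF : (fun n : ℕ => Real.log (r / s) ^ (l - 1) • ((s : ℂ) * ζ) ^ n • a n)
        = fun n => F n s := by
      funext n
      rw [hterm s n, smul_smul]
    rw [heqF] at hsum
    exact hsum.tsum_eq
  -- identify term integrals
  have hterm_int : (fun n => ∫ s in Set.Ioo (0:ℝ) r, F n s)
      = fun n : ℕ => (Real.Gamma l * r) • ((((1 + n : ℝ)) ^ l)⁻¹ • ((r : ℂ) * ζ) ^ n • a n) := by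
    funext n
    simp only [hF, hc]
    rw [integral_smul_const, (key_int hl n hr0).2, hterm r n, smul_smul, smul_smul]
    congr 1
    ring
  have hsum2 : HasSum (fun n => ∫ s in Set.Ioo (0:ℝ) r, F n s)
      ((Real.Gamma l * r) • g ((r : ℂ) * ζ)) := by
    rw [hterm_int]
    exact (hg _ (hmemz r hr0 hr1)).const_smul _
  have hint_eq : ∫ s in Set.Ioo (0:ℝ) r, ∑' n, F n s
      = (Real.Gamma l * r) • g ((r : ℂ) * ζ) := hsum_int.unique hsum2
  rw [intervalIntegral.integral_of_le hr0.le, integral_Ioc_eq_integral_Ioo,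
    ← setIntegral_congr_fun measurableSet_Ioo hptwise, hint_eq, smul_smul,
    inv_mul_cancel₀ (by positivity), one_smul]
end

section
/- Let H = ℓ²(ℕ), let (e_n) be its canonical orthonormal basis, α > 0, and β_n = (1+n)^{-(α+1/2)}. Consider the H-valued Hankel matrix X = [β_{m+n} e_{m+n}]_{m,n≥0} acting from ℓ²(ℕ) to ℓ²(ℕ, H). Then X·diag((1+n)^α) is bounded with ‖X diag((1+n)^α)‖² = sup_n (1+n)^{2α} ∑_{k≥n} (1+k)^{-(2α+1)} < ∞, while diag applied on the other side is unbounded: sup_k ∑_{n≥0} (1+n)^{2α}(1+n+k)^{-(2α+1)} = ∞, so D^α X (multiplying the n-th row block by (1+n)^α) is unbounded. -/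
/-!
The columns of `X D^α` are pairwise orthogonal, so `‖X D^α c‖²` is the `|c_n|²`-weighted sum of
the squared column norms `(1+n)^{2α} ∑_{k≥n} (1+k)^{-(2α+1)}`. Comparing each term of the tail
with the increment of `x ↦ x^{-2α}/(2α)` (mean value theorem) bounds the tail by a multiple of
`(1+n)^{-2α}`, so these norms stay below `1 + 1/(2α)`. For `D^α X`, the `n`-th entry of column `k`
is at least `(1+k)^{-2α} (1+n+k)^{-1}`, so each column has the norm of a harmonic tail.
-/

open Finset
open scoped ENNReal

theorem mul_rpow_neg_add_one_le_sub {s x : ℝ} (hs : 0 ≤ s) (hx : 0 < x) :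
    s * (x + 1) ^ (-(s + 1)) ≤ x ^ (-s) - (x + 1) ^ (-s) := by
  obtain ⟨c, ⟨hxc, hc1⟩, hc⟩ := exists_hasDerivAt_eq_slope (fun t : ℝ => t ^ (-s))
    (fun t => -s * t ^ (-s - 1)) (lt_add_one x)
    (fun t ht => (Real.continuousAt_rpow_const _ _ (Or.inl (by linarith [ht.1]))).continuousWithinAt)
    (fun t ht => Real.hasDerivAt_rpow_const (Or.inl (by linarith [ht.1])))
  have hc_pow : (x + 1) ^ (-(s + 1)) ≤ c ^ (-s - 1) := by
    rw [neg_add']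
    exact Real.rpow_le_rpow_of_nonpos (by linarith) hc1.le (by linarith)
  rw [add_sub_cancel_left, div_one] at hc
  nlinarith

theorem sum_range_rpow_neg_le {s x : ℝ} (hs : 0 < s) (hx : 1 ≤ x) (N : ℕ) :
    ∑ k ∈ range N, (x + k) ^ (-(s + 1)) ≤ (1 + 1 / s) * x ^ (-s) := by
  have htail : ∀ N : ℕ, ∑ k ∈ range N, (x + (k + 1 : ℕ)) ^ (-(s + 1)) ≤ x ^ (-s) / s := by
    intro N
    rw [le_div_iff₀' hs]
    calc s * ∑ k ∈ range N, (x + (k + 1 : ℕ)) ^ (-(s + 1))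
        ≤ ∑ k ∈ range N, ((x + k) ^ (-s) - (x + (k + 1 : ℕ)) ^ (-s)) := by
          rw [mul_sum]
          refine sum_le_sum fun k _ => ?_
          rw [Nat.cast_succ, ← add_assoc]
          exact mul_rpow_neg_add_one_le_sub hs.le (by linarith [k.cast_nonneg (α := ℝ)])
      _ = x ^ (-s) - (x + N) ^ (-s) := by
          rw [sum_range_sub' (fun k : ℕ => (x + k) ^ (-s)), Nat.cast_zero, add_zero]
      _ ≤ x ^ (-s) := sub_le_self _ (by positivity)
  have hhead : x ^ (-(s + 1)) ≤ x ^ (-s) :=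
    Real.rpow_le_rpow_of_exponent_le hx (by linarith)
  cases N with
  | zero => simp only [range_zero, sum_empty]; positivity
  | succ N =>
    rw [sum_range_succ', Nat.cast_zero, add_zero, one_add_mul, one_div_mul_eq_div]
    linarith [htail N]

theorem tsum_ofReal_rpow_neg_le {s x : ℝ} (hs : 0 < s) (hx : 1 ≤ x) :
    ∑' k : ℕ, ENNReal.ofReal ((x + k) ^ (-(s + 1))) ≤ ENNReal.ofReal ((1 + 1 / s) * x ^ (-s)) := by
  refine ENNReal.tsum_le_of_sum_range_le fun N => ?_
  rw [← ENNReal.ofReal_sum_of_nonneg fun k _ => by positivity]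
  exact ENNReal.ofReal_le_ofReal (sum_range_rpow_neg_le hs hx N)

theorem ofReal_rpow_mul_tsum_rpow_neg_le {s x : ℝ} (hs : 0 < s) (hx : 1 ≤ x) :
    ENNReal.ofReal (x ^ s) * ∑' k : ℕ, ENNReal.ofReal ((x + k) ^ (-(s + 1)))
      ≤ ENNReal.ofReal (1 + 1 / s) := by
  have hx0 : 0 < x := by linarith
  calc ENNReal.ofReal (x ^ s) * ∑' k : ℕ, ENNReal.ofReal ((x + k) ^ (-(s + 1)))
      ≤ ENNReal.ofReal (x ^ s) * ENNReal.ofReal ((1 + 1 / s) * x ^ (-s)) := by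
        gcongr; exact tsum_ofReal_rpow_neg_le hs hx
    _ = ENNReal.ofReal (1 + 1 / s) := by
        rw [← ENNReal.ofReal_mul (by positivity), mul_left_comm, ← Real.rpow_add hx0,
          add_neg_cancel, Real.rpow_zero, mul_one]

theorem ENNReal.tsum_prod_eq_tsum_tsum_add_of_le {f : ℕ × ℕ → ℝ≥0∞}
    (hf : ∀ p : ℕ × ℕ, ¬ p.1 ≤ p.2 → f p = 0) :
    ∑' p, f p = ∑' m, ∑' n, f (m, m + n) := by
  have hinj : Function.Injective fun q : ℕ × ℕ => (q.1, q.1 + q.2) := by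
    rintro ⟨a, b⟩ ⟨a', b'⟩ h
    simp only [Prod.mk.injEq] at h
    obtain ⟨rfl, h⟩ := h
    simp only [Prod.mk.injEq, true_and]
    omega
  have hsupp : Function.support f ⊆ Set.range fun q : ℕ × ℕ => (q.1, q.1 + q.2) := by
    rintro ⟨m, j⟩ hp
    have hmj : m ≤ j := not_not.1 fun h => hp (hf _ h)
    exact ⟨(m, j - m), by simp [Nat.add_sub_cancel' hmj]⟩
  rw [← hinj.tsum_eq hsupp, ENNReal.tsum_prod']

theorem ENNReal.tsum_tsum_mul_le_iSup_mul_tsum {ι κ : Type*} (f : ι → κ → ℝ≥0∞) (g : κ → ℝ≥0∞) :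
    ∑' i, ∑' j, f i j * g j ≤ (⨆ j, ∑' i, f i j) * ∑' j, g j := by
  rw [ENNReal.tsum_comm, ← ENNReal.tsum_mul_left]
  refine ENNReal.tsum_le_tsum fun j => ?_
  rw [ENNReal.tsum_mul_right]
  exact mul_le_mul_left (le_iSup (fun j => ∑' i, f i j) j) _

theorem norm_ofReal_rpow_mul_sq {α x y : ℝ} (hx : 0 ≤ x) (hy : 0 ≤ y) (z : ℂ) :
    ‖((x ^ (-(α + 1 / 2)) * y ^ α : ℝ) : ℂ) * z‖ ^ 2
      = x ^ (-(2 * α + 1)) * y ^ (2 * α) * ‖z‖ ^ 2 := by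
  rw [norm_mul, Complex.norm_real, Real.norm_of_nonneg (by positivity), mul_pow, mul_pow,
    ← Real.rpow_mul_natCast hx, ← Real.rpow_mul_natCast hy]
  ring_nf

theorem rpow_neg_mul_inv_le {a u v : ℝ} (ha : 0 ≤ a) (hu : 0 ≤ u) (hv : 0 ≤ v) :
    (1 + v) ^ (-a) * (1 + (u + v))⁻¹ ≤ (1 + u) ^ a * (1 + (u + v)) ^ (-(a + 1)) := by
  have hw : 0 < 1 + (u + v) := by positivity
  have hratio : (1 + v)⁻¹ ≤ (1 + u) / (1 + (u + v)) := by
    rw [inv_eq_one_div, div_le_div_iff₀ (by positivity) hw]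
    nlinarith
  calc (1 + v) ^ (-a) * (1 + (u + v))⁻¹
      ≤ ((1 + u) / (1 + (u + v))) ^ a * (1 + (u + v))⁻¹ := by
        rw [Real.rpow_neg (by positivity), ← Real.inv_rpow (by positivity)]
        gcongr
    _ = (1 + u) ^ a * (1 + (u + v)) ^ (-(a + 1)) := by
        rw [Real.div_rpow (by positivity) hw.le, neg_add, Real.rpow_add hw, Real.rpow_neg hw.le,
          Real.rpow_neg_one]
        ring

theorem not_summable_rpow_mul_rpow_neg {a : ℝ} (ha : 0 ≤ a) (k : ℕ) :
    ¬ Summable fun n : ℕ => (1 + n : ℝ) ^ a * (1 + (n + k) : ℝ) ^ (-(a + 1)) := by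
  intro h
  have hc : 0 < (1 + k : ℝ) ^ (-a) := by positivity
  have hharm : Summable fun n : ℕ => 1 / |(n : ℝ) + (1 + k)| ^ (1 : ℝ) := by
    refine ((h.of_nonneg_of_le (fun n => by positivity)
      fun n => rpow_neg_mul_inv_le ha n.cast_nonneg k.cast_nonneg).mul_left
        ((1 + k : ℝ) ^ (-a))⁻¹).congr fun n => ?_
    rw [inv_mul_cancel_left₀ hc.ne', Real.rpow_one, abs_of_pos (by positivity), one_div]
    ring
  exact lt_irrefl _ ((Real.summable_one_div_nat_add_rpow _ _).1 hharm)

theorem ENNReal.tsum_ofReal_eq_top_of_not_summable {ι : Type*} {f : ι → ℝ} (hf : ∀ i, 0 ≤ f i)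
    (h : ¬ Summable f) : ∑' i, ENNReal.ofReal (f i) = ⊤ := by
  by_contra hne
  exact h ((ENNReal.summable_toReal hne).congr fun i => ENNReal.toReal_ofReal (hf i))

theorem tsum_ofReal_column_eq (α : ℝ) (n : ℕ) :
    ∑' m : ℕ, ENNReal.ofReal ((1 + (m + n) : ℝ) ^ (-(2 * α + 1)) * (1 + n : ℝ) ^ (2 * α))
      = ENNReal.ofReal ((1 + n : ℝ) ^ (2 * α)) *
          ∑' k : ℕ, ENNReal.ofReal ((1 + (n + k) : ℝ) ^ (-(2 * α + 1))) := by
  rw [← ENNReal.tsum_mul_left]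
  refine tsum_congr fun m => ?_
  rw [← ENNReal.ofReal_mul (by positivity), mul_comm, add_comm (m : ℝ)]

/-- With `β_n = (1+n)^{-(α+1/2)}` and the vector Hankel matrix `X = [β_{m+n} e_{m+n}]`,
the operator `X · diag((1+n)^α)` is bounded, with squared norm
`sup_n (1+n)^{2α} ∑_{k≥n} (1+k)^{-(2α+1)} < ∞` (the columns being pairwise orthogonal,
the squared norm of `X diag((1+n)^α) c` is dominated by this supremum times `∑ |c_n|²`,
with equality on basis vectors), while `diag((1+n)^α) · X` is unbounded: each of its
columns has infinite norm, `∑_n (1+n)^{2α} (1+n+k)^{-(2α+1)} = ∞`. -/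
theorem stmt_11 (α : ℝ) (hα : 0 < α) :
    -- the supremum giving the squared norm of `X D^α` is finite
    (⨆ n : ℕ, ENNReal.ofReal ((1 + n : ℝ) ^ (2 * α)) *
        ∑' k : ℕ, ENNReal.ofReal ((1 + (n + k) : ℝ) ^ (-(2 * α + 1)))) < ⊤
    ∧ -- boundedness of `X D^α`: entry of `X diag((1+n)^α) c` at `(m, j)` is
      -- `β_j (1+(j-m))^α c_{j-m}` if `m ≤ j`, and `0` otherwise
      (∀ c : ℕ → ℂ,
        ∑' p : ℕ × ℕ,
            ENNReal.ofReal
              (‖(if p.1 ≤ p.2 then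
                  (((1 + p.2 : ℝ) ^ (-(α + 1 / 2)) * (1 + (p.2 - p.1) : ℝ) ^ α : ℝ) : ℂ) *
                    c (p.2 - p.1)
                else 0)‖ ^ 2)
          ≤ (⨆ n : ℕ, ENNReal.ofReal ((1 + n : ℝ) ^ (2 * α)) *
                ∑' k : ℕ, ENNReal.ofReal ((1 + (n + k) : ℝ) ^ (-(2 * α + 1)))) *
              ∑' n : ℕ, ENNReal.ofReal (‖c n‖ ^ 2))
    ∧ -- the squared norm of `X D^α` on the basis vector `e_n` is exactly the supremand
      (∀ n : ℕ,
        ∑' m : ℕ,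
            ENNReal.ofReal
              ((1 + (m + n) : ℝ) ^ (-(2 * α + 1)) * (1 + n : ℝ) ^ (2 * α))
          = ENNReal.ofReal ((1 + n : ℝ) ^ (2 * α)) *
              ∑' k : ℕ, ENNReal.ofReal ((1 + (n + k) : ℝ) ^ (-(2 * α + 1))))
    ∧ -- unboundedness of `D^α X`: each column has infinite `ℓ²`-norm
      (∀ k : ℕ,
        ∑' n : ℕ,
            ENNReal.ofReal ((1 + n : ℝ) ^ (2 * α) * (1 + (n + k) : ℝ) ^ (-(2 * α + 1)))
          = ⊤) := by
  have h2α : 0 < 2 * α := by positivity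
  refine ⟨?_, fun c => ?_, tsum_ofReal_column_eq α, fun k => ?_⟩
  · refine (iSup_le fun n => ?_).trans_lt (ENNReal.ofReal_lt_top (r := 1 + 1 / (2 * α)))
    simp_rw [← add_assoc]
    exact ofReal_rpow_mul_tsum_rpow_neg_le h2α (le_add_of_nonneg_right n.cast_nonneg)
  · rw [ENNReal.tsum_prod_eq_tsum_tsum_add_of_le fun p hp => by simp [hp]]
    calc _ = ∑' m : ℕ, ∑' n : ℕ,
            ENNReal.ofReal ((1 + (m + n) : ℝ) ^ (-(2 * α + 1)) * (1 + n : ℝ) ^ (2 * α)) *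
              ENNReal.ofReal (‖c n‖ ^ 2) := by
          refine tsum_congr fun m => tsum_congr fun n => ?_
          rw [if_pos (m.le_add_right n), Nat.add_sub_cancel_left, Nat.cast_add,
            add_sub_cancel_left, norm_ofReal_rpow_mul_sq (by positivity) (by positivity),
            ENNReal.ofReal_mul (by positivity)]
      _ ≤ _ := by
          refine (ENNReal.tsum_tsum_mul_le_iSup_mul_tsum _ _).trans_eq ?_
          simp_rw [tsum_ofReal_column_eq]
  · exact ENNReal.tsum_ofReal_eq_top_of_not_summable (fun n => by positivity)
      (not_summable_rpow_mul_rpow_neg h2α.le k)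
end

section
/- Let H be a Hilbert space and let f, g be H-valued analytic polynomials of degree at most l (with l ≥ 1). Then, with D the coefficient operator (1+n) and α > 0, ‖D^{-l}((D^α f) ⊗ (D^l g)^∨)‖_{A¹_{α-1,log}(S¹)} ≤ C_α · l · ‖f‖_{H²(H)} ‖g‖_{H²(H)}, where C_α depends only on α. Explicitly, the left side is bounded by ∑_{m,n=0}^l (1+m)^α (1+n)^l (1+m+n)^{-l} · 2^α Γ(1+α)(2+m+n)^{-α} ‖f̂(m)‖‖ĝ(n)‖ ≤ C_α ∑_{m,n=0}^l ‖f̂(m)‖‖ĝ(n)‖ ≤ C_α l ‖f‖_{H²(H)}‖g‖_{H²(H)}. -/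
/-!
The integrand is radial, so polar coordinates and the substitution `r = e^{-u}` turn the
`dA_{α-1,log}`-integral of `|z|^k` into a Gamma integral, `2^α Γ(1+α) / (k+2)^α`. In the
coefficient of `‖f̂(m)‖ ‖ĝ(n)‖` the factor `(2+m+n)^{-α}` absorbs `(1+m)^α` and
`(1+n)^l ≤ (1+m+n)^l`, so every coefficient is at most `2^α Γ(1+α)`; Cauchy–Schwarz bounds the
remaining double sum `∑ ‖f̂(m)‖ ∑ ‖ĝ(n)‖` by `(l+1) ‖f‖ ‖g‖ ≤ 2l ‖f‖ ‖g‖`.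
-/

open MeasureTheory Finset Real

lemma setIntegral_ball_fun_norm {E : Type*} [NormedAddCommGroup E] [NormedSpace ℝ E]
    (f : ℝ → E) (R : ℝ) :
    ∫ z in Metric.ball (0 : ℂ) R, f ‖z‖ = (2 * π) • ∫ r in Set.Ioo 0 R, r • f r := by
  have hball : (Metric.ball (0 : ℂ) R).indicator (fun z => f ‖z‖) =
      fun z => (Set.Iio R).indicator f ‖z‖ := by
    ext z
    simp [Set.indicator]
  have hvol : volume.real (Metric.ball (0 : ℂ) 1) = π := by simp [measureReal_def]
  have hradial : (Set.Ioi 0).indicator (fun r : ℝ => r ^ (2 - 1) • (Set.Iio R).indicator f r) =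
      (Set.Ioo 0 R).indicator (fun r => r • f r) := by
    ext r
    by_cases h0 : 0 < r <;> by_cases hR : r < R <;> simp [Set.indicator, h0, hR]
  rw [← integral_indicator measurableSet_ball, hball, integral_fun_norm_addHaar,
    Complex.finrank_real_complex, hvol, ← integral_indicator measurableSet_Ioi, hradial,
    integral_indicator measurableSet_Ioo, ← Nat.cast_smul_eq_nsmul ℝ, smul_smul]
  norm_num

lemma integral_Ioo_pow_mul_log_rpow {s : ℝ} (hs : -1 < s) (k : ℕ) :
    ∫ r in Set.Ioo (0 : ℝ) 1, r ^ k * log (1 / r ^ 2) ^ s =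
      2 ^ s * Gamma (s + 1) / (k + 1) ^ (s + 1) := by
  have himage : (fun u : ℝ => exp (-u)) '' Set.Ioi 0 = Set.Ioo 0 1 := by
    ext r
    constructor
    · rintro ⟨u, hu, rfl⟩
      exact ⟨exp_pos _, exp_lt_one_iff.2 (neg_lt_zero.2 hu)⟩
    · rintro ⟨h0, h1⟩
      exact ⟨-log r, neg_pos.2 (log_neg h0 h1), by simp [exp_log h0]⟩
  have hderiv : ∀ u ∈ Set.Ioi (0 : ℝ),
      HasDerivWithinAt (fun u => exp (-u)) (-exp (-u)) (Set.Ioi 0) u :=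
    fun u _ => by simpa using (hasDerivAt_neg u).exp.hasDerivWithinAt
  have hinj : Set.InjOn (fun u : ℝ => exp (-u)) (Set.Ioi 0) :=
    (exp_injective.comp neg_injective).injOn
  have hsubst : ∀ u ∈ Set.Ioi (0 : ℝ),
      |-exp (-u)| • (exp (-u) ^ k * log (1 / exp (-u) ^ 2) ^ s) =
        2 ^ s * (u ^ (s + 1 - 1) * exp (-((k + 1) * u))) := by
    intro u hu
    have hlog : log (1 / exp (-u) ^ 2) = 2 * u := by
      rw [← exp_nat_mul, one_div, ← exp_neg, log_exp]
      ring
    rw [hlog, mul_rpow zero_le_two (le_of_lt hu), abs_neg, abs_of_pos (exp_pos _), smul_eq_mul,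
      ← exp_nat_mul, add_sub_cancel_right, ← mul_assoc (exp _), ← exp_add]
    ring_nf
  rw [← himage, integral_image_eq_integral_abs_deriv_smul measurableSet_Ioi hderiv hinj,
    setIntegral_congr_fun measurableSet_Ioi hsubst, integral_const_mul,
    integral_rpow_mul_exp_neg_mul_Ioi (by linarith) (by positivity),
    div_rpow zero_le_one (by positivity), one_rpow]
  ring

/-- The density of the measure `dA_{α-1,log}` on the unit disc with respect to area measure. -/
noncomputable def logBergmanWeight (α : ℝ) (z : ℂ) : ℝ :=
  α / π * log (1 / ‖z‖ ^ 2) ^ (α - 1)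

lemma setIntegral_ball_norm_pow_mul_logBergmanWeight {α : ℝ} (hα : 0 < α) (k : ℕ) :
    ∫ z in Metric.ball (0 : ℂ) 1, ‖z‖ ^ k * logBergmanWeight α z =
      2 ^ α * Gamma (α + 1) / (k + 2) ^ α := by
  unfold logBergmanWeight
  rw [setIntegral_ball_fun_norm (fun r => r ^ k * (α / π * log (1 / r ^ 2) ^ (α - 1))),
    setIntegral_congr_fun measurableSet_Ioo
      (g := fun r => α / π * (r ^ (k + 1) * log (1 / r ^ 2) ^ (α - 1)))
      (fun r _ => by simp only [smul_eq_mul]; ring),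
    integral_const_mul, integral_Ioo_pow_mul_log_rpow (by linarith), sub_add_cancel,
    Gamma_add_one hα.ne', smul_eq_mul, rpow_sub_one two_ne_zero]
  push_cast
  rw [add_assoc, one_add_one_eq_two]
  field_simp

lemma integrableOn_ball_norm_pow_mul_logBergmanWeight {α : ℝ} (hα : 0 < α) (k : ℕ) :
    IntegrableOn (fun z : ℂ => ‖z‖ ^ k * logBergmanWeight α z) (Metric.ball 0 1) :=
  .of_integral_ne_zero <| by
    rw [setIntegral_ball_norm_pow_mul_logBergmanWeight hα]
    positivity

lemma setIntegral_ball_sum_mul_logBergmanWeight {α : ℝ} (hα : 0 < α) (s t : Finset ℕ)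
    (c : ℕ → ℕ → ℝ) :
    ∫ z in Metric.ball (0 : ℂ) 1,
        (∑ m ∈ s, ∑ n ∈ t, c m n * ‖z‖ ^ (m + n)) * logBergmanWeight α z =
      ∑ m ∈ s, ∑ n ∈ t, c m n * (2 ^ α * Gamma (α + 1) / (m + n + 2) ^ α) := by
  have hint (m n : ℕ) : IntegrableOn (fun z => c m n * (‖z‖ ^ (m + n) * logBergmanWeight α z))
      (Metric.ball 0 1) :=
    (integrableOn_ball_norm_pow_mul_logBergmanWeight hα _).const_mul _
  simp only [sum_mul, mul_assoc]
  rw [integral_finsetSum _ fun m _ => integrable_finsetSum _ fun n _ => hint m n]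
  refine sum_congr rfl fun m _ => ?_
  rw [integral_finsetSum _ fun n _ => hint m n]
  refine sum_congr rfl fun n _ => ?_
  rw [integral_const_mul, setIntegral_ball_norm_pow_mul_logBergmanWeight hα]
  push_cast
  ring

lemma rpow_mul_pow_div_pow_mul_div_rpow_le {α x y G : ℝ} (hα : 0 ≤ α) (hx : 0 ≤ x)
    (hy : 0 ≤ y) (hG : 0 ≤ G) (l : ℕ) :
    (1 + x) ^ α * (1 + y) ^ l / (1 + x + y) ^ l * (G / (x + y + 2) ^ α) ≤ G := by
  rw [div_mul_div_comm, div_le_iff₀ (by positivity), mul_comm G, mul_comm ((1 + x + y) ^ l)]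
  refine mul_le_mul_of_nonneg_right ?_ hG
  exact mul_le_mul (rpow_le_rpow (by positivity) (by linarith) hα)
    (pow_le_pow_left₀ (by positivity) (by linarith) l) (by positivity) (by positivity)

lemma sum_mul_sum_le_card_mul_sqrt_mul_sqrt {ι : Type*} (s : Finset ι) (f g : ι → ℝ) :
    (∑ i ∈ s, f i) * ∑ i ∈ s, g i ≤ #s * (√(∑ i ∈ s, f i ^ 2) * √(∑ i ∈ s, g i ^ 2)) :=
  calc (∑ i ∈ s, f i) * ∑ i ∈ s, g i
      ≤ √((∑ i ∈ s, f i) ^ 2) * √((∑ i ∈ s, g i) ^ 2) := by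
        rw [sqrt_sq_eq_abs, sqrt_sq_eq_abs, ← abs_mul]
        exact le_abs_self _
    _ ≤ √(#s * ∑ i ∈ s, f i ^ 2) * √(#s * ∑ i ∈ s, g i ^ 2) := by
        gcongr <;> exact sq_sum_le_card_mul_sum_sq
    _ = (√(#s : ℝ) * √(#s : ℝ)) * (√(∑ i ∈ s, f i ^ 2) * √(∑ i ∈ s, g i ^ 2)) := by
        rw [sqrt_mul (Nat.cast_nonneg _), sqrt_mul (Nat.cast_nonneg _)]
        ring
    _ = #s * (√(∑ i ∈ s, f i ^ 2) * √(∑ i ∈ s, g i ^ 2)) := by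
        rw [mul_self_sqrt (Nat.cast_nonneg _)]

/-- Low-frequency estimate: for `H`-valued polynomials `f, g` of degree at most `l`, the
`A¹_{α-1,log}(S¹)`-norm of `D^{-l}((D^α f) ⊗ (D^l g)∨)` is bounded (via the triangle
inequality, the rank-one norm `‖x ⊗ y‖_{S¹} = ‖x‖‖y‖` and the monomial computation
`‖z^{m+n}‖_{A¹_{α-1,log}} = 2^α Γ(1+α)/(2+m+n)^α`) by
`∑_{m,n=0}^l (1+m)^α (1+n)^l (1+m+n)^{-l} ‖f̂(m)‖ ‖ĝ(n)‖ ‖z^{m+n}‖ ≤ C_α l ‖f‖‖g‖`. -/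
theorem stmt_19 (α : ℝ) (hα : 0 < α) :
    ∃ C > 0,
      ∀ (H : Type) [NormedAddCommGroup H] [InnerProductSpace ℂ H],
        ∀ (l : ℕ), 1 ≤ l → ∀ (a b : ℕ → H),
          ∫ z in Metric.ball (0 : ℂ) 1,
              (∑ m ∈ range (l + 1), ∑ n ∈ range (l + 1),
                  (1 + m : ℝ) ^ α * (1 + n : ℝ) ^ l / (1 + m + n : ℝ) ^ l *
                    ‖a m‖ * ‖b n‖ * ‖z‖ ^ (m + n)) *
                (α / Real.pi) * Real.log (1 / ‖z‖ ^ 2) ^ (α - 1)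
            ≤ C * l *
                Real.sqrt (∑ m ∈ range (l + 1), ‖a m‖ ^ 2) *
                Real.sqrt (∑ n ∈ range (l + 1), ‖b n‖ ^ 2) := by
  refine ⟨2 ^ (α + 1) * Gamma (α + 1), by positivity, fun H _ _ l hl a b => ?_⟩
  set G := 2 ^ α * Gamma (α + 1)
  set w : ℕ → ℕ → ℝ := fun m n => (1 + m : ℝ) ^ α * (1 + n : ℝ) ^ l / (1 + m + n : ℝ) ^ l
  have hl_succ : (l + 1 : ℝ) ≤ 2 * l := by
    have : (1 : ℝ) ≤ l := by exact_mod_cast hl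
    linarith
  calc _ = ∫ z in Metric.ball (0 : ℂ) 1, (∑ m ∈ range (l + 1), ∑ n ∈ range (l + 1),
          w m n * ‖a m‖ * ‖b n‖ * ‖z‖ ^ (m + n)) * logBergmanWeight α z := by
        simp only [logBergmanWeight, w, mul_assoc]
    _ = ∑ m ∈ range (l + 1), ∑ n ∈ range (l + 1),
          w m n * ‖a m‖ * ‖b n‖ * (G / (m + n + 2) ^ α) :=
        setIntegral_ball_sum_mul_logBergmanWeight hα _ _ _
    _ ≤ ∑ m ∈ range (l + 1), ∑ n ∈ range (l + 1), G * (‖a m‖ * ‖b n‖) := by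
        refine sum_le_sum fun m _ => sum_le_sum fun n _ => ?_
        calc w m n * ‖a m‖ * ‖b n‖ * (G / (m + n + 2) ^ α)
            = w m n * (G / (m + n + 2) ^ α) * (‖a m‖ * ‖b n‖) := by ring
          _ ≤ G * (‖a m‖ * ‖b n‖) := by
            gcongr
            exact rpow_mul_pow_div_pow_mul_div_rpow_le hα.le m.cast_nonneg n.cast_nonneg
              (by positivity) l
    _ = G * ((∑ m ∈ range (l + 1), ‖a m‖) * ∑ n ∈ range (l + 1), ‖b n‖) := by
        rw [sum_mul_sum, mul_sum]
        simp only [mul_sum]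
    _ ≤ G * ((l + 1) * (√(∑ m ∈ range (l + 1), ‖a m‖ ^ 2) *
          √(∑ n ∈ range (l + 1), ‖b n‖ ^ 2))) := by
        gcongr G * ?_
        simpa using sum_mul_sum_le_card_mul_sqrt_mul_sqrt (range (l + 1)) (‖a ·‖) (‖b ·‖)
    _ ≤ G * (2 * l * (√(∑ m ∈ range (l + 1), ‖a m‖ ^ 2) *
          √(∑ n ∈ range (l + 1), ‖b n‖ ^ 2))) := by
        gcongr
    _ = _ := by
        rw [rpow_add_one two_ne_zero]
        ring
end
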